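/- arXiv:1606.05063 — 5 statements merged into one kernel-verified Lean document; each statement's English description precedes it below -/
import Mathlib

section
/- Let G be an abelian group and let g ∈ G be an element of odd prime order p. For every k ≥ 1, the zero-sum sequence B_k = ((2g)^p · g^p)^k (i.e., the sequence consisting of 2g with multiplicity pk and g with multiplicity pk) has set of factorization lengths L(B_k) = [2k, 3k], the integer interval from 2k to 3k. -/
variable {G : Type*} [AddCommGroup G]

/-- `S` is a minimal zero-sum sequence over `G`. -/
def IsMinZS (S : Multiset G) : Prop :=
  S ≠ 0 ∧ S.sum = 0 ∧ ∀ T : Multiset G, T ≤ S → T ≠ 0 → T ≠ S → T.sum ≠ 0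

/-- The set of factorization lengths of `S` into atoms (minimal zero-sum sequences)
of the monoid of zero-sum sequences over `G`. -/
def ZSLengths (S : Multiset G) : Set ℕ :=
  {n | ∃ l : Multiset (Multiset G),
    Multiset.card l = n ∧ (∀ T ∈ l, IsMinZS T) ∧ l.sum = S}

open Multiset

lemma sum_rr (g : G) (a b : ℕ) :
    (replicate a g + replicate b (g + g)).sum = (a + 2 * b) • g := by
  rw [Multiset.sum_add, Multiset.sum_replicate, Multiset.sum_replicate, add_nsmul]
  congr 1
  rw [← two_nsmul, ← mul_nsmul]

lemma nsmul_zero_iff {g : G} {p : ℕ} (hg : addOrderOf g = p) (n : ℕ) :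
    n • g = 0 ↔ p ∣ n := by
  rw [← hg]; exact addOrderOf_dvd_iff_nsmul_eq_zero.symm

/-- Structure of a submultiset of a multiset supported on two distinct elements. -/
lemma sub_two_elt [DecidableEq G] {g h : G} (hgh : g ≠ h) {a b : ℕ} {T : Multiset G}
    (hT : T ≤ replicate a g + replicate b h) :
    T = replicate (T.count g) g + replicate (T.count h) h ∧ T.count g ≤ a ∧ T.count h ≤ b := by
  have hc : ∀ x, T.count x ≤ (replicate a g + replicate b h).count x :=
    fun x => count_le_of_le x hT
  refine ⟨?_, ?_, ?_⟩
  · ext x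
    by_cases hx : x = g
    · subst hx; simp [count_replicate, hgh, Ne.symm hgh]
    · by_cases hy : x = h
      · subst hy; simp [count_replicate, hgh, Ne.symm hgh]
      · have := hc x
        simp only [count_add, count_replicate] at this ⊢
        rw [if_neg (fun hh => hx hh.symm), if_neg (fun hh => hy hh.symm)] at this ⊢
        omega
  · have := hc g
    simpa [count_replicate, hgh, Ne.symm hgh] using this
  · have := hc h
    simpa [count_replicate, hgh, Ne.symm hgh] using this

lemma ne_add_self {g : G} {p : ℕ} (hp : p.Prime) (hg : addOrderOf g = p) : g ≠ g + g := by
  intro h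
  have hg0 : g = 0 := by
    have := h
    nth_rewrite 1 [← add_zero g] at this
    exact (add_left_cancel this).symm
  rw [hg0, addOrderOf_zero] at hg
  exact hp.one_lt.ne' hg.symm

/-- Atoms of the form `g^a (2g)^b` with `a + 2b = p`. -/
lemma isMinZS_mk [DecidableEq G] {g : G} {p : ℕ} (hp : p.Prime) (hg : addOrderOf g = p)
    (a b : ℕ) (hab : a + 2 * b = p) :
    IsMinZS (replicate a g + replicate b (g + g)) := by
  have hgh : g ≠ g + g := ne_add_self hp hg
  refine ⟨?_, ?_, ?_⟩
  · intro h
    apply_fun Multiset.card at h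
    simp only [card_add, card_replicate, card_zero] at h
    have := hp.two_le
    omega
  · rw [sum_rr, hab, (nsmul_zero_iff hg p)]
  · intro T hle hT0 hTS hsum
    obtain ⟨hstruct, ha, hb⟩ := sub_two_elt hgh hle
    set a' := T.count g with ha'
    set b' := T.count (g + g) with hb'
    rw [hstruct, sum_rr, nsmul_zero_iff hg] at hsum
    have hpos : a' + 2 * b' ≠ 0 := by
      intro h0
      apply hT0
      rw [hstruct]
      have : a' = 0 ∧ b' = 0 := by omega
      simp [this.1, this.2]
    have hle' : a' + 2 * b' ≤ p := by omega
    have heq : a' + 2 * b' = p := Nat.le_antisymm hle' (Nat.le_of_dvd (Nat.pos_of_ne_zero hpos) hsum)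
    have : a' = a ∧ b' = b := by omega
    exact hTS (by rw [hstruct, this.1, this.2])

/-- The atom `(2g)^p`. -/
lemma isMinZS_star [DecidableEq G] {g : G} {p : ℕ} (hp : p.Prime) (hodd : Odd p)
    (hg : addOrderOf g = p) :
    IsMinZS (replicate p (g + g)) := by
  have hp2 : ¬ (p ∣ 2) := by
    intro h
    have h1 := Nat.le_of_dvd (by norm_num) h
    have h2 := hp.two_le
    have h3 := Nat.odd_iff.1 hodd
    omega
  refine ⟨?_, ?_, ?_⟩
  · simp [← card_pos, hp.pos]
  · rw [Multiset.sum_replicate, ← two_nsmul, ← mul_nsmul, nsmul_zero_iff hg]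
    exact ⟨2, by ring⟩
  · intro T hle hT0 hTS hsum
    have hcard : Multiset.card T ≤ p := by
      have := Multiset.card_le_card hle
      simpa using this
    have hTrep : T = replicate (Multiset.card T) (g + g) :=
      (Multiset.eq_replicate_card).2 fun x hx => eq_of_mem_replicate (mem_of_le hle hx)
    rw [hTrep, Multiset.sum_replicate, ← two_nsmul, ← mul_nsmul, nsmul_zero_iff hg] at hsum
    have hdvd : p ∣ Multiset.card T := (hp.dvd_mul.1 hsum).resolve_left hp2
    rcases (Nat.eq_zero_or_pos (Multiset.card T)) with h0 | hposc
    · exact hT0 (by rw [hTrep, h0, replicate_zero])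
    · have : Multiset.card T = p := Nat.le_antisymm hcard (Nat.le_of_dvd hposc hdvd)
      exact hTS (by rw [hTrep, this])

/-- Key bounds satisfied by any atom dividing `B_k`. -/
lemma atom_bounds [DecidableEq G] {g : G} {p : ℕ} (hp : p.Prime) (hodd : Odd p)
    (hg : addOrderOf g = p) {T : Multiset G} {M N : ℕ}
    (hmin : IsMinZS T) (hle : T ≤ replicate M g + replicate N (g + g)) :
    p ≤ T.count g + 2 * T.count (g + g) ∧ T.count g + T.count (g + g) ≤ p := by
  have hgh : g ≠ g + g := ne_add_self hp hg
  obtain ⟨hstruct, -, -⟩ := sub_two_elt hgh hle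
  set a := T.count g with ha
  set b := T.count (g + g) with hb
  have hps : T.sum = (a + 2 * b) • g := by rw [hstruct, sum_rr]
  have hdvd : p ∣ a + 2 * b := by
    rw [← nsmul_zero_iff hg, ← hps]; exact hmin.2.1
  have hpos : a + 2 * b ≠ 0 := by
    intro h0
    apply hmin.1
    rw [hstruct]
    have : a = 0 ∧ b = 0 := by omega
    simp [this.1, this.2]
  have h1 : p ≤ a + 2 * b := Nat.le_of_dvd (Nat.pos_of_ne_zero hpos) hdvd
  refine ⟨h1, ?_⟩
  by_contra hcon
  push_neg at hcon
  obtain ⟨m, hm⟩ := hodd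
  have hp2 : 2 ≤ p := hp.two_le
  have hcardT : Multiset.card T = a + b := by rw [hstruct]; simp
  rcases Nat.eq_zero_or_pos a with haz | hapos
  · -- a = 0, b > p : extract (2g)^p
    refine hmin.2.2 (replicate p (g + g)) ?_ ?_ ?_ ?_
    · rw [hstruct, haz, replicate_zero, zero_add]
      exact (replicate_le_replicate _).2 (by omega)
    · simp [← card_pos, hp.pos]
    · intro h
      apply_fun Multiset.card at h
      simp only [card_replicate] at h
      omega
    · rw [Multiset.sum_replicate, ← two_nsmul, ← mul_nsmul, nsmul_zero_iff hg]
      exact ⟨2, by ring⟩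
  · -- a ≥ 1 : extract g^(p-2b') (2g)^b' with b' = min b m
    have key : ∀ a' b' : ℕ, a' + 2 * b' = p → a' ≤ a → b' ≤ b → False := by
      intro a' b' hs' ha'le hb'le
      refine hmin.2.2 (replicate a' g + replicate b' (g + g)) ?_ ?_ ?_ ?_
      · rw [hstruct]
        exact add_le_add ((replicate_le_replicate _).2 ha'le)
          ((replicate_le_replicate _).2 hb'le)
      · intro h
        apply_fun Multiset.card at h
        simp only [card_add, card_replicate, card_zero] at h
        omega
      · intro h
        apply_fun Multiset.card at h
        simp only [card_add, card_replicate] at h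
        rw [hcardT] at h
        omega
      · rw [sum_rr, hs', nsmul_zero_iff hg]
    rcases le_total b m with hbm | hmb
    · exact key (p - 2 * b) b (by omega) (by omega) le_rfl
    · exact key 1 m (by omega) (by omega) hmb

lemma count_msum [DecidableEq G] (x : G) (l : Multiset (Multiset G)) :
    l.sum.count x = (l.map (fun T => T.count x)).sum := by
  induction l using Multiset.induction with
  | empty => simp
  | cons T l ih => simp [ih]

/-- If `g ∈ G` has odd prime order `p`, then for every `k ≥ 1` the zero-sum sequence
`B_k = ((2g)^p g^p)^k` (i.e. `2g` and `g` each with multiplicity `pk`) has set of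
lengths `L(B_k) = [2k, 3k]`. -/
theorem stmt2 (g : G) (p : ℕ) (hp : p.Prime) (hodd : Odd p)
    (hg : addOrderOf g = p) (k : ℕ) (hk : 1 ≤ k) :
    ZSLengths (Multiset.replicate (p * k) (g + g) + Multiset.replicate (p * k) g)
      = Set.Icc (2 * k) (3 * k) := by
  classical
  have hgh : g ≠ g + g := ne_add_self hp hg
  have hpodd : p % 2 = 1 := Nat.odd_iff.1 hodd
  have hp2 : 2 ≤ p := hp.two_le
  have hp3 : 3 ≤ p := by omega
  have hB : Multiset.replicate (p * k) (g + g) + Multiset.replicate (p * k) g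
      = Multiset.replicate (p * k) g + Multiset.replicate (p * k) (g + g) := add_comm _ _
  ext n
  simp only [ZSLengths, Set.mem_setOf_eq, Set.mem_Icc]
  constructor
  · rintro ⟨l, hcard, hatoms, hsum⟩
    rw [hB] at hsum
    -- per-atom bounds
    have hbd : ∀ T ∈ l, p ≤ T.count g + 2 * T.count (g + g) ∧
        T.count g + T.count (g + g) ≤ p := by
      intro T hT
      have hTle : T ≤ l.sum := by
        obtain ⟨l', rfl⟩ := exists_cons_of_mem hT
        rw [Multiset.sum_cons]
        exact Multiset.le_add_right _ _
      rw [hsum] at hTle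
      exact atom_bounds hp hodd hg (hatoms T hT) hTle
    -- total counts
    have hcg : (l.map (fun T => T.count g)).sum = p * k := by
      rw [← count_msum, hsum]
      simp [count_replicate, hgh, Ne.symm hgh]
    have hc2g : (l.map (fun T => T.count (g + g))).sum = p * k := by
      rw [← count_msum, hsum]
      simp [count_replicate, hgh, Ne.symm hgh]
    -- upper bound: n * p ≤ 3 p k
    have hup : Multiset.card l • p ≤ (l.map (fun T => T.count g + 2 * T.count (g + g))).sum := by
      have := Multiset.card_nsmul_le_sum (s := l.map (fun T => T.count g + 2 * T.count (g + g)))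
        (a := p) ?_
      · simpa using this
      · intro x hx
        obtain ⟨T, hT, rfl⟩ := Multiset.mem_map.1 hx
        exact (hbd T hT).1
    have hupv : (l.map (fun T => T.count g + 2 * T.count (g + g))).sum = 3 * (p * k) := by
      rw [Multiset.sum_map_add]
      have : (l.map fun T => 2 * T.count (g + g)).sum
          = 2 * (l.map fun T => T.count (g + g)).sum := Multiset.sum_map_mul_left
      rw [this, hcg, hc2g]; ring
    have hlow : (l.map (fun T => T.count g + T.count (g + g))).sum ≤ Multiset.card l • p := by
      have := Multiset.sum_le_card_nsmul (s := l.map (fun T => T.count g + T.count (g + g)))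
        (n := p) ?_
      · simpa using this
      · intro x hx
        obtain ⟨T, hT, rfl⟩ := Multiset.mem_map.1 hx
        exact (hbd T hT).2
    have hlowv : (l.map (fun T => T.count g + T.count (g + g))).sum = 2 * (p * k) := by
      rw [Multiset.sum_map_add, hcg, hc2g]; ring
    rw [hupv, hcard, smul_eq_mul] at hup
    rw [hlowv, hcard, smul_eq_mul] at hlow
    constructor
    · have : (2 * k) * p ≤ n * p := by nlinarith
      exact Nat.le_of_mul_le_mul_right this hp.pos
    · have : n * p ≤ (3 * k) * p := by nlinarith
      exact Nat.le_of_mul_le_mul_right this hp.pos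
  · rintro ⟨h2k, h3k⟩
    set t := n - 2 * k with ht
    have htk : t ≤ k := by omega
    have hn : n = 2 * k + t := by omega
    refine ⟨replicate (k - t) (replicate p g) + replicate (k - t) (replicate p (g + g))
      + replicate t (replicate (p - 2) g + replicate 1 (g + g))
      + replicate (2 * t) (replicate 1 g + replicate ((p - 1) / 2) (g + g)), ?_, ?_, ?_⟩
    · simp only [card_add, card_replicate]
      omega
    · intro T hT
      simp only [Multiset.mem_add] at hT
      rcases hT with ((h1 | h2) | h3) | h4
      · rw [eq_of_mem_replicate h1]
        have := isMinZS_mk hp hg p 0 (by omega)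
        simpa using this
      · rw [eq_of_mem_replicate h2]
        exact isMinZS_star hp hodd hg
      · rw [eq_of_mem_replicate h3]
        exact isMinZS_mk hp hg (p - 2) 1 (by omega)
      · rw [eq_of_mem_replicate h4]
        exact isMinZS_mk hp hg 1 ((p - 1) / 2) (by omega)
    · rw [hB]
      obtain ⟨m, hmo⟩ := hodd
      have hm1 : 1 ≤ m := by omega
      obtain ⟨m', hm'⟩ : ∃ m', m = m' + 1 := ⟨m - 1, by omega⟩
      obtain ⟨k', hk'⟩ : ∃ k', k = t + k' := ⟨k - t, by omega⟩
      have e1 : k - t = k' := by omega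
      have e2 : p - 2 = 2 * m' + 1 := by omega
      have e3 : (p - 1) / 2 = m' + 1 := by omega
      have e4 : p = 2 * m' + 3 := by omega
      ext x
      rw [count_msum]
      simp only [Multiset.map_add, Multiset.map_replicate, Multiset.sum_add,
        Multiset.sum_replicate, smul_eq_mul, count_add, count_replicate]
      by_cases hx1 : g = x
      · have hx2 : ¬ (g + g = x) := fun h => hgh (hx1.trans h.symm)
        simp only [if_pos hx1, if_neg hx2]
        simp only [e1, e2, e3]
        simp only [e4, hk']
        ring
      · by_cases hx2 : g + g = x
        · simp only [if_neg hx1, if_pos hx2]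
          simp only [e1, e2, e3]
          simp only [e4, hk']
          ring
        · simp only [if_neg hx1, if_neg hx2]
          ring
end

section
/- Let G be a finite abelian group with |G| ≥ 3 containing either an element of order 4 or two independent elements of order 2 or an element of odd prime order. Then for every k ∈ ℕ and y ∈ ℕ₀, the shifted interval y + [2k, 3k] belongs to the system of sets of lengths L(G) = {L(B) : B ∈ B(G)}. Consequently {y + 2k + [0,k] : y, k ∈ ℕ₀} ⊆ L(G) for every finite abelian group G with |G| ≥ 3. -/
variable {G : Type*} [AddCommGroup G]

/-!
Since `0` is a prime element of `B(G)`, `L(0^y B) = y + L(B)`, so it suffices to find a zero-sum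
sequence with set of lengths `[2k, 3k]`. Each hypothesis supplies a block `D` with
`{2, 3} ⊆ L(D)`: `g² (-g)² (2g)²` if `ord g = 4`, `a² b² (a+b)²` for two distinct involutions, and
`g^p (2g)^p` if `ord g = p` is odd. Concatenating factorizations gives `[2k, 3k] ⊆ L(D^k)`.
Conversely, two additive weights `ψ, φ` with `ψ(D) = 3a`, `φ(D) = 2b` and `a ≤ ψ(T)`,
`φ(T) ≤ b` for every atom `T` over the support of `D` confine all lengths of `D^k` to `[2k, 3k]`.
These atom bounds come from three facts: a zero-free atom has at least two terms; an atom in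
a cyclic group has at most `ord g` terms (prefix sums and pigeonhole); and a sequence over
`{u, 2u}` sums to `(|T| + v_{2u}(T)) • u`.
-/

open Multiset

theorem IsMinZS.eq_of_le {S T : Multiset G} (hT : IsMinZS T) (hST : S ≤ T) (hS : S ≠ 0)
    (hsum : S.sum = 0) : S = T := by
  by_contra hne
  exact hT.2.2 S hST hS hne hsum

theorem IsMinZS.eq_replicate_two [DecidableEq G] {T : Multiset G} {x : G} (hT : IsMinZS T)
    (hx : x + x = 0) (h2 : 2 ≤ count x T) : T = replicate 2 x :=
  (hT.eq_of_le (le_count_iff_replicate_le.1 h2) (by simp) (by simp [hx])).symm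

theorem isMinZS_of_forall_add {T : Multiset G} (hT : T ≠ 0) (hsum : T.sum = 0)
    (h : ∀ S S', S + S' = T → S ≠ 0 → S' ≠ 0 → S.sum = 0 → S'.sum = 0 → False) :
    IsMinZS T := by
  classical
  refine ⟨hT, hsum, fun S hST hS hne hS0 => h S (T - S) (add_tsub_cancel_of_le hST) hS ?_ hS0 ?_⟩
  · rw [Ne, tsub_eq_zero_iff_le]
    exact fun hTS => hne (le_antisymm hST hTS)
  · rwa [← add_tsub_cancel_of_le hST, sum_add, hS0, zero_add] at hsum

theorem two_le_card_of_sum_eq_zero {T : Multiset G} (hT : T ≠ 0) (hsum : T.sum = 0)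
    (h0 : (0 : G) ∉ T) : 2 ≤ card T := by
  by_contra! h
  interval_cases hc : card T
  · exact hT (card_eq_zero.1 hc)
  · obtain ⟨x, rfl⟩ := card_eq_one.1 hc
    simp_all

theorem isMinZS_of_card_le_three {T : Multiset G} (hT : T ≠ 0) (hsum : T.sum = 0)
    (h0 : (0 : G) ∉ T) (hcard : card T ≤ 3) : IsMinZS T := by
  refine isMinZS_of_forall_add hT hsum fun S S' hSS' hS hS' hS0 hS'0 => ?_
  subst hSS'
  have hS2 := two_le_card_of_sum_eq_zero hS hS0 fun h => h0 (mem_add.2 (Or.inl h))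
  have hS'2 := two_le_card_of_sum_eq_zero hS' hS'0 fun h => h0 (mem_add.2 (Or.inr h))
  rw [card_add] at hcard
  omega

theorem isMinZS_singleton_zero : IsMinZS ({0} : Multiset G) := by
  refine ⟨singleton_ne_zero 0, sum_singleton 0, fun S hS hS0 hne _ => ?_⟩
  rcases le_singleton.1 hS with rfl | rfl
  exacts [hS0 rfl, hne rfl]

theorem isMinZS_replicate_addOrderOf {x : G} (hx : 0 < addOrderOf x) :
    IsMinZS (replicate (addOrderOf x) x) := by
  refine isMinZS_of_forall_add (by rw [Ne, ← card_eq_zero, card_replicate]; exact hx.ne')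
    (by rw [sum_replicate, addOrderOf_nsmul_eq_zero]) fun S S' hSS' hS hS' hS0 _ => ?_
  obtain ⟨m, hm, rfl⟩ := le_replicate_iff.1 (hSS' ▸ le_add_right S S')
  have hmn := congrArg card hSS'
  rw [sum_replicate] at hS0
  rw [card_add, card_replicate, card_replicate] at hmn
  have := Nat.le_of_dvd (Nat.pos_of_ne_zero (by rintro rfl; simp at hS))
    (addOrderOf_dvd_of_nsmul_eq_zero hS0)
  exact hS' (card_eq_zero.1 (by omega))

theorem IsMinZS.card_le_natCard {H : AddSubgroup G} [Finite H] {T : Multiset G} (hT : IsMinZS T)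
    (hTH : ∀ x ∈ T, x ∈ H) : card T ≤ Nat.card H := by
  by_contra! hlt
  obtain ⟨L, rfl⟩ : ∃ L : List G, (L : Multiset G) = T := ⟨T.toList, coe_toList T⟩
  simp only [coe_card, mem_coe] at hlt hTH
  -- The segment between two equal prefix sums is a proper zero-sum subsequence.
  have hprefix : ∀ i j, i < j → j ≤ Nat.card H → (L.take i).sum ≠ (L.take j).sum := by
    intro i j hij hj hs
    have hsplit := List.sum_take_add_sum_drop (L.take j) i
    rw [List.take_take, min_eq_left hij.le, hs, add_eq_left] at hsplit
    refine hT.2.2 _ (coe_le.2 ((List.drop_sublist _ _).trans (List.take_sublist _ _)).subperm)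
      ?_ ?_ hsplit
    · simp only [ne_eq, coe_eq_zero, ← List.length_eq_zero_iff, List.length_drop,
        List.length_take]
      omega
    · intro h
      have := congrArg card h
      simp only [coe_card, List.length_drop, List.length_take] at this
      omega
  let s : Fin (Nat.card H + 1) → H := fun i =>
    ⟨(L.take i).sum, H.list_sum_mem fun x hx => hTH x (List.mem_of_mem_take hx)⟩
  obtain ⟨i, j, hs, hij⟩ := Function.not_injective_iff.1 fun hinj => by
    simpa using Nat.card_le_card_of_injective s hinj
  have hs' : (L.take i).sum = (L.take j).sum := congrArg Subtype.val hs
  rcases lt_or_gt_of_ne (Fin.val_ne_of_ne hij) with h | h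
  · exact hprefix i j h (by omega) hs'
  · exact hprefix j i h (by omega) hs'.symm

theorem IsMinZS.card_le_addOrderOf {g : G} (hg : 0 < addOrderOf g) {T : Multiset G}
    (hT : IsMinZS T) (hTg : ∀ x ∈ T, x ∈ AddSubgroup.zmultiples g) : card T ≤ addOrderOf g := by
  have : Finite (AddSubgroup.zmultiples g) :=
    (addOrderOf_pos_iff.1 hg).finite_zmultiples.to_subtype
  simpa [Nat.card_zmultiples] using hT.card_le_natCard hTg

section DoubledElement

variable [DecidableEq G] {u : G} {T : Multiset G}

theorem sum_eq_card_add_count_nsmul (hT : ∀ x ∈ T, x = u ∨ x = u + u) :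
    T.sum = (card T + count (u + u) T) • u := by
  induction T using Multiset.induction_on with
  | empty => simp
  | cons x T ih =>
    rw [sum_cons, ih fun y hy => hT y (mem_cons_of_mem hy), card_cons, count_cons]
    rcases hT x (mem_cons_self x T) with rfl | rfl
    · split_ifs with hx
      · simp [add_eq_left.1 hx]
      · rw [add_zero, add_right_comm, succ_nsmul, add_comm]
    · rw [if_pos rfl, add_add_add_comm]
      simp only [add_nsmul, one_nsmul]
      abel

theorem addOrderOf_dvd_card_add_count (hsum : T.sum = 0) (hT : ∀ x ∈ T, x = u ∨ x = u + u) :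
    addOrderOf u ∣ card T + count (u + u) T :=
  addOrderOf_dvd_of_nsmul_eq_zero (sum_eq_card_add_count_nsmul hT ▸ hsum)

theorem addOrderOf_le_card_add_count (hT0 : T ≠ 0) (hsum : T.sum = 0)
    (hT : ∀ x ∈ T, x = u ∨ x = u + u) : addOrderOf u ≤ card T + count (u + u) T :=
  Nat.le_of_dvd (by simpa [Nat.pos_iff_ne_zero] using Or.inl hT0)
    (addOrderOf_dvd_card_add_count hsum hT)

end DoubledElement

theorem isMinZS_replicate_add_replicate {u : G} (hu : 1 < addOrderOf u) {i j : ℕ}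
    (hij : i + 2 * j = addOrderOf u) : IsMinZS (replicate i u + replicate j (u + u)) := by
  classical
  have hne : u ≠ u + u := fun H => by simp [left_eq_add.1 H] at hu
  have hmem : ∀ x ∈ replicate i u + replicate j (u + u), x = u ∨ x = u + u := by
    intro x hx
    rcases mem_add.1 hx with hx | hx
    exacts [Or.inl (eq_of_mem_replicate hx), Or.inr (eq_of_mem_replicate hx)]
  have hweight : card (replicate i u + replicate j (u + u))
      + count (u + u) (replicate i u + replicate j (u + u)) = addOrderOf u := by
    simp only [card_add, card_replicate, count_add, count_replicate, hne, ↓reduceIte,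
      zero_add]
    omega
  refine isMinZS_of_forall_add
    (by rw [Ne, ← card_eq_zero, card_add, card_replicate, card_replicate]; omega)
    (by rw [sum_eq_card_add_count_nsmul hmem, hweight, addOrderOf_nsmul_eq_zero])
    fun S S' hSS' hS hS' hS0 hS'0 => ?_
  rw [← hSS'] at hmem hweight
  have hS := addOrderOf_le_card_add_count hS hS0 fun x hx => hmem x (mem_add.2 (Or.inl hx))
  have hS' := addOrderOf_le_card_add_count hS' hS'0 fun x hx => hmem x (mem_add.2 (Or.inr hx))
  rw [card_add, count_add] at hweight
  omega

theorem sum_eq_zero_of_mem_zsLengths {B : Multiset G} {n : ℕ} (hn : n ∈ ZSLengths B) :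
    B.sum = 0 := by
  obtain ⟨l, -, hl, rfl⟩ := hn
  change (join l).sum = 0
  rw [sum_join]
  exact sum_eq_zero fun x hx => by
    obtain ⟨T, hT, rfl⟩ := mem_map.1 hx
    exact (hl T hT).2.1

theorem zero_mem_zsLengths_zero : 0 ∈ ZSLengths (0 : Multiset G) :=
  ⟨0, rfl, by simp, rfl⟩

theorem add_mem_zsLengths {A B : Multiset G} {m n : ℕ} (hm : m ∈ ZSLengths A)
    (hn : n ∈ ZSLengths B) : m + n ∈ ZSLengths (A + B) := by
  obtain ⟨l, rfl, hl, rfl⟩ := hm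
  obtain ⟨l', rfl, hl', rfl⟩ := hn
  refine ⟨l + l', card_add l l', fun T hT => ?_, sum_add l l'⟩
  rcases mem_add.1 hT with hT | hT
  exacts [hl T hT, hl' T hT]

theorem nsmul_mem_zsLengths {D : Multiset G} {m : ℕ} (hm : m ∈ ZSLengths D) (i : ℕ) :
    i * m ∈ ZSLengths (i • D) := by
  induction i with
  | zero => simpa using zero_mem_zsLengths_zero
  | succ i ih => simpa [add_mul, succ_nsmul] using add_mem_zsLengths ih hm

theorem zsLengths_zero_cons (B : Multiset G) :
    ZSLengths (0 ::ₘ B) = (· + 1) '' ZSLengths B := by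
  classical
  ext n
  constructor
  · rintro ⟨l, rfl, hl, hsum⟩
    obtain ⟨T, hT, h0T⟩ := mem_join.1 (by rw [join, hsum]; exact mem_cons_self 0 B)
    obtain rfl : T = {0} := ((hl T hT).eq_of_le (singleton_le.2 h0T) (by simp) (by simp)).symm
    rw [← cons_erase hT, sum_cons, singleton_add, cons_inj_right] at hsum
    exact ⟨card (l.erase {0}), ⟨l.erase {0}, rfl, fun T hT => hl T (mem_of_mem_erase hT), hsum⟩,
      card_erase_add_one hT⟩
  · rintro ⟨n, ⟨l, rfl, hl, rfl⟩, rfl⟩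
    refine ⟨{0} ::ₘ l, card_cons _ _, fun T hT => ?_, by simp⟩
    rcases mem_cons.1 hT with rfl | hT
    exacts [isMinZS_singleton_zero, hl T hT]

theorem zsLengths_replicate_zero_add (y : ℕ) (B : Multiset G) :
    ZSLengths (replicate y 0 + B) = (· + y) '' ZSLengths B := by
  induction y with
  | zero => simp
  | succ y ih =>
    rw [replicate_succ, cons_add, zsLengths_zero_cons, ih, Set.image_image]
    simp only [add_assoc]

theorem Icc_subset_zsLengths_nsmul {D : Multiset G} (h2 : 2 ∈ ZSLengths D)
    (h3 : 3 ∈ ZSLengths D) (k : ℕ) : Set.Icc (2 * k) (3 * k) ⊆ ZSLengths (k • D) := by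
  rintro n ⟨hlo, hhi⟩
  have := add_mem_zsLengths (nsmul_mem_zsLengths h2 (3 * k - n))
    (nsmul_mem_zsLengths h3 (n - 2 * k))
  rwa [← add_nsmul, show 3 * k - n + (n - 2 * k) = k by omega,
    show (3 * k - n) * 2 + (n - 2 * k) * 3 = n by omega] at this

theorem card_mul_le_of_forall_le {M : Type*} [AddCommMonoid M] (φ : M →+ ℕ) {l : Multiset M}
    {a : ℕ} (h : ∀ x ∈ l, a ≤ φ x) : card l * a ≤ φ l.sum := by
  simpa [map_multiset_sum] using card_nsmul_le_sum (s := l.map φ) (a := a) (by simpa using h)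

theorem le_card_mul_of_forall_le {M : Type*} [AddCommMonoid M] (φ : M →+ ℕ) {l : Multiset M}
    {b : ℕ} (h : ∀ x ∈ l, φ x ≤ b) : φ l.sum ≤ card l * b := by
  simpa [map_multiset_sum] using sum_le_card_nsmul (l.map φ) b (by simpa using h)

theorem zsLengths_nsmul_eq_Icc {D : Multiset G} (h2 : 2 ∈ ZSLengths D) (h3 : 3 ∈ ZSLengths D)
    (φ ψ : Multiset G →+ ℕ) {a b : ℕ} (ha : 0 < a) (hb : 0 < b) (hψ : ψ D = 3 * a)
    (hφ : φ D = 2 * b) (hatom : ∀ T, IsMinZS T → (∀ x ∈ T, x ∈ D) → a ≤ ψ T ∧ φ T ≤ b)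
    (k : ℕ) : ZSLengths (k • D) = Set.Icc (2 * k) (3 * k) := by
  refine subset_antisymm ?_ (Icc_subset_zsLengths_nsmul h2 h3 k)
  rintro _ ⟨l, rfl, hl, hsum⟩
  have hmem : ∀ T ∈ l, ∀ x ∈ T, x ∈ D := fun T hT x hx =>
    mem_of_mem_nsmul (hsum ▸ mem_of_le (le_sum_of_mem hT) hx)
  have hupper := card_mul_le_of_forall_le ψ fun T hT => (hatom T (hl T hT) (hmem T hT)).1
  have hlower := le_card_mul_of_forall_le φ fun T hT => (hatom T (hl T hT) (hmem T hT)).2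
  rw [hsum, _root_.map_nsmul, hψ, smul_eq_mul] at hupper
  rw [hsum, _root_.map_nsmul, hφ, smul_eq_mul] at hlower
  constructor
  · nlinarith
  · nlinarith

theorem IsMinZS.card_add_count_le_four [DecidableEq G] {g : G} (hg : addOrderOf g = 4)
    {T : Multiset G} (hT : IsMinZS T) (hTg : ∀ x ∈ T, x = g ∨ x = -g ∨ x = g + g) :
    card T + count (g + g) T ≤ 4 := by
  have h4 : (4 : ℕ) • g = 0 := hg ▸ addOrderOf_nsmul_eq_zero g
  have hnegneg : -g + -g = g + g := by
    calc -g + -g = g + g - 4 • g := by abel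
      _ = g + g := by rw [h4, sub_zero]
  have hcard : card T ≤ 4 := hg ▸ hT.card_le_addOrderOf (by omega) fun x hx => by
    rcases hTg x hx with rfl | rfl | rfl
    · exact AddSubgroup.mem_zmultiples x
    · exact neg_mem (AddSubgroup.mem_zmultiples _)
    · exact add_mem (AddSubgroup.mem_zmultiples _) (AddSubgroup.mem_zmultiples _)
  by_cases h2 : 2 ≤ count (g + g) T
  · rw [hT.eq_replicate_two (by rw [← h4]; abel) h2]
    simp
  by_cases hpm : g ∈ T ∧ -g ∈ T
  · have hgneg : g ≠ -g := fun h => by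
      have := addOrderOf_dvd_of_nsmul_eq_zero (x := g) (n := 2) (by
        rw [two_nsmul]; nth_rw 2 [h]; exact add_neg_cancel g)
      rw [hg] at this
      norm_num at this
    have hpair := hT.eq_of_le
      ((le_iff_subset (nodup_cons.2 ⟨by simpa using hgneg, nodup_singleton _⟩)).2
        (by simp [cons_subset, hpm.1, hpm.2])) (by simp) (by simp)
    have := count_le_card (g + g) T
    rw [← hpair] at this ⊢
    simp only [card_cons, card_singleton] at this ⊢
    omega
  -- Otherwise `T` lives on `{u, 2u}` for `u = g` or `u = -g`, so its weight is divisible by 4.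
  obtain ⟨u, hu, huu, hTu⟩ : ∃ u : G, addOrderOf u = 4 ∧ u + u = g + g ∧
      ∀ x ∈ T, x = u ∨ x = u + u := by
    by_cases hgT : g ∈ T
    · refine ⟨g, hg, rfl, fun x hx => ?_⟩
      rcases hTg x hx with rfl | rfl | rfl
      exacts [Or.inl rfl, absurd ⟨hgT, hx⟩ hpm, Or.inr rfl]
    · refine ⟨-g, by rw [addOrderOf_neg, hg], hnegneg, fun x hx => ?_⟩
      rcases hTg x hx with rfl | rfl | rfl
      exacts [absurd hx hgT, Or.inl rfl, Or.inr hnegneg.symm]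
  have hdvd := addOrderOf_dvd_card_add_count hT.2.1 hTu
  rw [hu, huu] at hdvd
  have hpos := card_pos.2 hT.1
  omega

theorem zsLengths_nsmul_eq_Icc_of_addOrderOf_eq_four {g : G} (hg : addOrderOf g = 4) (k : ℕ) :
    ZSLengths (k • 2 • ({g, -g, g + g} : Multiset G)) = Set.Icc (2 * k) (3 * k) := by
  classical
  have h4 : (4 : ℕ) • g = 0 := hg ▸ addOrderOf_nsmul_eq_zero g
  have hnsmul : ∀ n, 0 < n → n < 4 → n • g ≠ 0 := fun n hn0 hn4 h => by
    have := Nat.le_of_dvd hn0 (hg ▸ addOrderOf_dvd_of_nsmul_eq_zero h)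
    omega
  have hg0 : g ≠ 0 := by simpa using hnsmul 1
  have hgg0 : g + g ≠ 0 := by simpa [two_nsmul] using hnsmul 2
  have hgg : g + g + (g + g) = 0 := by rw [← h4]; abel
  have hg_gg : g ≠ g + g := fun h => hg0 (left_eq_add.1 h)
  have hneg_gg : -g ≠ g + g := fun h => hnsmul 3 (by norm_num) (by norm_num) (by
    calc 3 • g = g + g - -g := by abel
      _ = 0 := by rw [h, sub_self])
  refine zsLengths_nsmul_eq_Icc ?_ ?_ (cardHom + countAddMonoidHom (g + g)) cardHom
    (a := 2) (b := 4) two_pos four_pos (by simp)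
    (by simp [hg_gg.symm, hneg_gg.symm]) (fun T hT hTD => ?_) k
  · refine ⟨{{g, g, g + g}, {-g, -g, g + g}}, rfl, ?_, ?_⟩
    · simp only [insert_eq_cons, mem_cons, mem_singleton]
      rintro T (rfl | rfl)
      · exact isMinZS_of_card_le_three (by simp) (by simpa [← add_assoc] using hgg)
          (by simp [hg0.symm, hgg0.symm]) (by simp)
      · exact isMinZS_of_card_le_three (by simp) (by simp)
          (by simp [hg0, hgg0.symm]) (by simp)
    · simp only [insert_eq_cons, sum_cons, sum_singleton]
      simp only [← singleton_add]
      abel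
  · refine ⟨{{g, -g}, {g, -g}, {g + g, g + g}}, rfl, ?_, ?_⟩
    · simp only [insert_eq_cons, mem_cons, mem_singleton]
      rintro T (rfl | rfl | rfl)
      · exact isMinZS_of_card_le_three (by simp) (by simp) (by simp [hg0.symm, hg0]) (by simp)
      · exact isMinZS_of_card_le_three (by simp) (by simp) (by simp [hg0.symm, hg0]) (by simp)
      · exact isMinZS_of_card_le_three (by simp) (by simpa using hgg) (by simp [hgg0.symm])
          (by simp)
    · simp only [insert_eq_cons, sum_cons, sum_singleton]
      simp only [← singleton_add]
      abel
  have hTD : ∀ x ∈ T, x = g ∨ x = -g ∨ x = g + g := fun x hx => by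
    simpa using mem_of_mem_nsmul (hTD x hx)
  refine ⟨two_le_card_of_sum_eq_zero hT.1 hT.2.1 fun h0 => ?_, ?_⟩
  · rcases hTD 0 h0 with h | h | h
    exacts [hg0 h.symm, hg0 (neg_eq_zero.1 h.symm), hgg0 h.symm]
  simpa using hT.card_add_count_le_four hg hTD

theorem IsMinZS.card_le_max_two_card [DecidableEq G] {T : Multiset G} (hT : IsMinZS T)
    {s : Finset G} (hTs : ∀ x ∈ T, x ∈ s) (hs : ∀ x ∈ s, x + x = 0) :
    card T ≤ max 2 s.card := by
  by_cases hdup : ∃ x, 2 ≤ count x T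
  · obtain ⟨x, hx⟩ := hdup
    rw [hT.eq_replicate_two (hs x (hTs x (count_pos.1 (by omega)))) hx, card_replicate]
    exact le_max_left _ _
  simp only [not_exists, not_le] at hdup
  have hnodup : T.Nodup := nodup_iff_count_le_one.2 fun x => Nat.le_of_lt_succ (hdup x)
  calc card T = T.toFinset.card := (toFinset_card_of_nodup hnodup).symm
    _ ≤ s.card := Finset.card_le_card fun x hx => hTs x (mem_toFinset.1 hx)
    _ ≤ max 2 s.card := le_max_right _ _

theorem zsLengths_nsmul_eq_Icc_of_addOrderOf_eq_two {a b : G} (ha : addOrderOf a = 2)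
    (hb : addOrderOf b = 2) (hab : a ≠ b) (k : ℕ) :
    ZSLengths (k • 2 • ({a, b, a + b} : Multiset G)) = Set.Icc (2 * k) (3 * k) := by
  classical
  have haa : a + a = 0 := by rw [← two_nsmul, ← ha, addOrderOf_nsmul_eq_zero]
  have hbb : b + b = 0 := by rw [← two_nsmul, ← hb, addOrderOf_nsmul_eq_zero]
  have hD : ∀ x ∈ ({a, b, a + b} : Multiset G), x ≠ 0 ∧ x + x = 0 := by
    simp only [insert_eq_cons, mem_cons, mem_singleton]
    rintro x (rfl | rfl | rfl)
    · exact ⟨fun h => by simp [h] at ha, haa⟩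
    · exact ⟨fun h => by simp [h] at hb, hbb⟩
    · refine ⟨fun h => hab ?_, by rw [add_add_add_comm, haa, hbb, add_zero]⟩
      rw [← neg_eq_of_add_eq_zero_right h, neg_eq_of_add_eq_zero_left haa]
  have hpair : ∀ x ∈ ({a, b, a + b} : Multiset G), IsMinZS (replicate 2 x) := fun x hx =>
    isMinZS_of_card_le_three (by simp) (by simp [(hD x hx).2])
      (by simp [(hD x hx).1.symm]) (by simp)
  have htriple : IsMinZS ({a, b, a + b} : Multiset G) :=
    isMinZS_of_card_le_three (by simp) (by simpa [← add_assoc] using (hD (a + b) (by simp)).2)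
      (fun h => (hD 0 h).1 rfl) (by simp)
  refine zsLengths_nsmul_eq_Icc ?_ ?_ cardHom cardHom two_pos three_pos (by simp) (by simp)
    (fun T hT hTD => ?_) k
  · refine ⟨replicate 2 {a, b, a + b}, card_replicate _ _, fun T hT => ?_, sum_replicate _ _⟩
    rwa [eq_of_mem_replicate hT]
  · refine ⟨{replicate 2 a, replicate 2 b, replicate 2 (a + b)}, rfl, ?_, ?_⟩
    · simp only [insert_eq_cons, mem_cons, mem_singleton]
      rintro T (rfl | rfl | rfl) <;> exact hpair _ (by simp)
    · simp only [insert_eq_cons, replicate_succ, replicate_zero, ← singleton_add]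
      abel
  have hTD : ∀ x ∈ T, x ∈ ({a, b, a + b} : Finset G) := fun x hx => by
    simpa using mem_of_mem_nsmul (hTD x hx)
  refine ⟨two_le_card_of_sum_eq_zero hT.1 hT.2.1 fun h0 => (hD 0 (by simpa using hTD 0 h0)).1 rfl,
    ?_⟩
  exact (hT.card_le_max_two_card hTD fun x hx => (hD x (by simpa using hx)).2).trans
    (max_le (by norm_num) Finset.card_le_three)

theorem zsLengths_nsmul_eq_Icc_of_odd_addOrderOf {g : G} (hodd : Odd (addOrderOf g))
    (hg : 1 < addOrderOf g) (k : ℕ) :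
    ZSLengths (k • (replicate (addOrderOf g) g + replicate (addOrderOf g) (g + g))) =
      Set.Icc (2 * k) (3 * k) := by
  classical
  have hgg : addOrderOf (g + g) = addOrderOf g := by
    rw [← two_nsmul]
    exact Nat.Coprime.addOrderOf_nsmul (Nat.coprime_two_right.2 hodd)
  have hg0 : g ≠ 0 := fun H => by simp [H] at hg
  obtain ⟨d, hd⟩ := hodd
  refine zsLengths_nsmul_eq_Icc ?_ ?_ cardHom (cardHom + countAddMonoidHom (g + g))
    (a := addOrderOf g) (b := addOrderOf g) (by omega) (by omega)
    (by
      simp only [AddMonoidHom.add_apply, cardHom_apply, coe_countAddMonoidHom, card_add,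
        card_replicate, count_add, count_replicate, left_eq_add, hg0, ↓reduceIte,
        zero_add]
      ring)
    (by rw [cardHom_apply, card_add, card_replicate, card_replicate]; ring) (fun T hT hTD => ?_) k
  · refine ⟨{replicate (addOrderOf g) g, replicate (addOrderOf g) (g + g)}, rfl, ?_, by simp⟩
    simp only [insert_eq_cons, mem_cons, mem_singleton]
    rintro T (rfl | rfl)
    · simpa only [replicate_zero, add_zero] using
        isMinZS_replicate_add_replicate hg (j := 0) (add_zero _)
    · simpa [hgg] using isMinZS_replicate_addOrderOf (x := g + g) (by omega)
  · refine ⟨{replicate 1 g + replicate d (g + g), replicate 1 g + replicate d (g + g),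
      replicate (addOrderOf g - 2) g + replicate 1 (g + g)}, rfl, ?_, ?_⟩
    · simp only [insert_eq_cons, mem_cons, mem_singleton]
      rintro T (rfl | rfl | rfl) <;> exact isMinZS_replicate_add_replicate hg (by omega)
    · ext x
      simp only [insert_eq_cons, sum_cons, sum_singleton, count_add, count_replicate]
      split_ifs <;> omega
  have hTD : ∀ x ∈ T, x = g ∨ x = g + g := fun x hx => by
    rcases mem_add.1 (hTD x hx) with h | h
    exacts [Or.inl (eq_of_mem_replicate h), Or.inr (eq_of_mem_replicate h)]
  simp only [AddMonoidHom.add_apply, cardHom_apply, coe_countAddMonoidHom]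
  refine ⟨addOrderOf_le_card_add_count hT.1 hT.2.1 hTD, ?_⟩
  refine hT.card_le_addOrderOf (by omega) fun x hx => ?_
  rcases hTD x hx with rfl | rfl
  · exact AddSubgroup.mem_zmultiples x
  · exact add_mem (AddSubgroup.mem_zmultiples _) (AddSubgroup.mem_zmultiples _)

theorem stmt4_general
    (hyp : (∃ a : G, addOrderOf a = 4) ∨
      (∃ a b : G, addOrderOf a = 2 ∧ addOrderOf b = 2 ∧ a ≠ b) ∨
      (∃ p : ℕ, p.Prime ∧ Odd p ∧ ∃ a : G, addOrderOf a = p))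
    (y k : ℕ) :
    ∃ B : Multiset G, B.sum = 0 ∧ ZSLengths B = Set.Icc (y + 2 * k) (y + 3 * k) := by
  obtain ⟨D, hD⟩ : ∃ D : Multiset G, ZSLengths (k • D) = Set.Icc (2 * k) (3 * k) := by
    rcases hyp with ⟨g, hg⟩ | ⟨a, b, ha, hb, hab⟩ | ⟨p, hp, hodd, g, rfl⟩
    · exact ⟨_, zsLengths_nsmul_eq_Icc_of_addOrderOf_eq_four hg k⟩
    · exact ⟨_, zsLengths_nsmul_eq_Icc_of_addOrderOf_eq_two ha hb hab k⟩
    · exact ⟨_, zsLengths_nsmul_eq_Icc_of_odd_addOrderOf hodd hp.one_lt k⟩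
  have hsum : (k • D).sum = 0 :=
    sum_eq_zero_of_mem_zsLengths (hD ▸ Set.left_mem_Icc.2 (by omega) : 2 * k ∈ ZSLengths (k • D))
  refine ⟨replicate y 0 + k • D, by simp [hsum], ?_⟩
  rw [zsLengths_replicate_zero_add, hD, Set.image_add_const_Icc, add_comm _ y, add_comm _ y]

/-- Let `G` be a finite abelian group with `|G| ≥ 3` containing an element of order 4, or two
independent elements of order 2, or an element of odd prime order. Then for all `y, k ∈ ℕ₀`
the shifted interval `y + [2k, 3k]` belongs to the system of sets of lengths of `𝓑(G)`. -/
theorem stmt4 [Fintype G] (hcard : 3 ≤ Fintype.card G)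
    (hyp : (∃ a : G, addOrderOf a = 4) ∨
      (∃ a b : G, addOrderOf a = 2 ∧ addOrderOf b = 2 ∧ a ≠ b) ∨
      (∃ p : ℕ, p.Prime ∧ Odd p ∧ ∃ a : G, addOrderOf a = p))
    (y k : ℕ) :
    ∃ B : Multiset G, B.sum = 0 ∧ ZSLengths B = Set.Icc (y + 2 * k) (y + 3 * k) :=
  stmt4_general hyp y k
end

section
/- Let H be a strongly primary monoid that is not half-factorial. Then there exists a rational β > 1 such that for every a ∈ H with |L(a)| ≥ 2 one has ρ(L(a)) = max L(a)/min L(a) ≥ β. That is, the elasticities of sets of lengths of H are bounded away from 1. -/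
/-!
Fix `b` with two lengths `k < l` and `N` with `𝔪 ^ N ⊆ bH`. If `a` has minimal length `m`, a
factorization of `a` of that length splits into `m / N` blocks of `N` atoms, so `b ^ (m / N) ∣ a`.
Trading the length-`k` factorizations of these copies of `b` for length-`l` ones gives two
lengths of `a` differing by at least `m / N`, whence `max L(a) ≥ m + max(1, m / N)`. Since
`m ≤ 2N · max(1, m / N)`, this gives `ρ(L(a)) ≥ 1 + 1/(2N)`.
-/

open Classical

/-- The set of factorization lengths of `a` into irreducible elements (atoms);
by convention `{0}` for invertible elements. -/
noncomputable def mLengths {H : Type*} [Monoid H] (a : H) : Set ℕ :=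
  if IsUnit a then {0}
  else {n | ∃ l : List H, l.length = n ∧ (∀ x ∈ l, Irreducible x) ∧ l.prod = a}

/-- A commutative cancellative monoid `M` is strongly primary if it has a non-unit and for
every non-unit `a` there is `n ∈ ℕ` such that every product of `n` non-units lies in `aM`. -/
def StronglyPrimary (M : Type*) [CancelCommMonoid M] : Prop :=
  (∃ a : M, ¬IsUnit a) ∧
    ∀ a : M, ¬IsUnit a → ∃ n : ℕ, 0 < n ∧
      ∀ l : List M, l.length = n → (∀ x ∈ l, ¬IsUnit x) → a ∣ l.prod

section CommMonoid

variable {H : Type*} [CommMonoid H]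

lemma mem_mLengths_iff {a : H} {n : ℕ} :
    n ∈ mLengths a ↔
      ∃ l : List H, l.length = n ∧ (∀ x ∈ l, Irreducible x) ∧ Associated l.prod a := by
  by_cases ha : IsUnit a
  · simp only [mLengths, if_pos ha, Set.mem_singleton_iff]
    constructor
    · rintro rfl
      exact ⟨[], rfl, by simp, (associated_one_iff_isUnit.mpr ha).symm⟩
    · rintro ⟨_ | ⟨x, t⟩, rfl, hirr, hassoc⟩
      · rfl
      · have hunits := List.prod_isUnit_iff.mp (hassoc.symm.isUnit ha)
        exact absurd (hunits x List.mem_cons_self) (hirr x List.mem_cons_self).not_isUnit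
  · simp only [mLengths, if_neg ha, Set.mem_ofPred_eq]
    constructor
    · rintro ⟨l, hl, hirr, rfl⟩
      exact ⟨l, hl, hirr, Associated.refl _⟩
    · rintro ⟨_ | ⟨x, t⟩, rfl, hirr, u, rfl⟩
      · simp at ha
      · refine ⟨(x * u) :: t, rfl, ?_, by simp only [List.prod_cons]; ac_rfl⟩
        simp only [List.mem_cons, forall_eq_or_imp] at hirr ⊢
        exact ⟨(irreducible_mul_isUnit u.isUnit).mpr hirr.1, hirr.2⟩

lemma pos_of_mem_mLengths {a : H} (ha : ¬IsUnit a) {n : ℕ} (hn : n ∈ mLengths a) : 0 < n := by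
  obtain ⟨_ | ⟨x, t⟩, rfl, -, hassoc⟩ := mem_mLengths_iff.mp hn
  · exact absurd (hassoc.isUnit isUnit_one) ha
  · exact Nat.succ_pos _

lemma not_isUnit_of_mem_mLengths_of_ne {a : H} {m n : ℕ} (hm : m ∈ mLengths a)
    (hn : n ∈ mLengths a) (hmn : m ≠ n) : ¬IsUnit a := by
  intro ha
  simp only [mLengths, if_pos ha, Set.mem_singleton_iff] at hm hn
  exact hmn (hm.trans hn.symm)

lemma add_mem_mLengths_mul {x y : H} {i j : ℕ} (hi : i ∈ mLengths x) (hj : j ∈ mLengths y) :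
    i + j ∈ mLengths (x * y) := by
  obtain ⟨l₁, rfl, hirr₁, hassoc₁⟩ := mem_mLengths_iff.mp hi
  obtain ⟨l₂, rfl, hirr₂, hassoc₂⟩ := mem_mLengths_iff.mp hj
  refine mem_mLengths_iff.mpr ⟨l₁ ++ l₂, List.length_append, ?_, ?_⟩
  · simpa only [List.mem_append, or_imp, forall_and] using ⟨hirr₁, hirr₂⟩
  · simpa only [List.prod_append] using hassoc₁.mul_mul hassoc₂

lemma mul_mem_mLengths_pow {b : H} {j : ℕ} (hj : j ∈ mLengths b) (q : ℕ) :
    q * j ∈ mLengths (b ^ q) := by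
  induction q with
  | zero => simp [mLengths]
  | succ q ih => simpa only [add_mul, one_mul, pow_succ] using add_mem_mLengths_mul ih hj

end CommMonoid

section CancelCommMonoid

variable {H : Type*} [CancelCommMonoid H]

/-- `𝔪 ^ N ⊆ b H`, where `𝔪` is the set of non-units of `H`. -/
def DvdProdOfLength (b : H) (N : ℕ) : Prop :=
  ∀ l : List H, l.length = N → (∀ x ∈ l, ¬IsUnit x) → b ∣ l.prod

lemma DvdProdOfLength.pow_dvd_prod {b : H} {N : ℕ} (hN : DvdProdOfLength b N) (q : ℕ)
    {l : List H} (hl : ∀ x ∈ l, ¬IsUnit x) (hlen : q * N ≤ l.length) : b ^ q ∣ l.prod := by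
  induction q generalizing l with
  | zero => simp
  | succ q ih =>
    rw [← List.take_append_drop N l, List.prod_append, pow_succ']
    refine mul_dvd_mul (hN _ ?_ fun x hx => hl x (List.mem_of_mem_take hx))
      (ih (fun x hx => hl x (List.mem_of_mem_drop hx)) ?_)
    · simp only [List.length_take]; rw [add_mul] at hlen; omega
    · simp only [List.length_drop]; rw [add_mul] at hlen; omega

lemma DvdProdOfLength.length_le {a : H} {N : ℕ} (hN : DvdProdOfLength a N) {l : List H}
    (hl : ∀ x ∈ l, ¬IsUnit x) (hla : l.prod ∣ a) : l.length ≤ N := by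
  by_contra! hlen
  obtain ⟨c, hc⟩ := hN (l.take N) (by simp only [List.length_take]; omega)
    fun x hx => hl x (List.mem_of_mem_take hx)
  obtain ⟨d, hd⟩ := hla
  rw [← List.take_append_drop N l, List.prod_append, hc] at hd
  have hunit : IsUnit (l.drop N).prod := by
    refine IsUnit.of_mul_eq_one (c * d) (mul_left_cancel (a := a) ?_)
    calc a * ((l.drop N).prod * (c * d)) = a * c * (l.drop N).prod * d := by ac_rfl
      _ = a * 1 := by rw [← hd, mul_one]
  obtain ⟨x, hx⟩ := List.exists_mem_of_ne_nil (l.drop N)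
    (by simp only [ne_eq, List.drop_eq_nil_iff]; omega)
  exact hl x (List.mem_of_mem_drop hx) (List.prod_isUnit_iff.mp hunit x hx)

namespace StronglyPrimary

lemma bddAbove_mLengths (hsp : StronglyPrimary H) (a : H) : BddAbove (mLengths a) := by
  by_cases ha : IsUnit a
  · simp [mLengths, if_pos ha]
  obtain ⟨N, -, hN⟩ : ∃ N, 0 < N ∧ DvdProdOfLength a N := hsp.2 a ha
  refine ⟨N, fun n hn => ?_⟩
  obtain ⟨l, rfl, hirr, hassoc⟩ := mem_mLengths_iff.mp hn
  exact hN.length_le (fun x hx => (hirr x hx).not_isUnit) hassoc.dvd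

/-- A factorization into non-units of maximal length cannot be refined, so it consists of atoms. -/
lemma mLengths_nonempty (hsp : StronglyPrimary H) (a : H) : (mLengths a).Nonempty := by
  by_cases ha : IsUnit a
  · simp [mLengths, if_pos ha]
  obtain ⟨N, -, hN⟩ : ∃ N, 0 < N ∧ DvdProdOfLength a N := hsp.2 a ha
  let T : Set ℕ := {n | ∃ l : List H, l.length = n ∧ (∀ x ∈ l, ¬IsUnit x) ∧ l.prod = a}
  have hT : T.Nonempty := ⟨1, [a], rfl, by simpa using ha, List.prod_singleton⟩
  have hTbdd : BddAbove T := ⟨N, fun n ⟨l, hl, hnu, hprod⟩ => hl ▸ hN.length_le hnu hprod.dvd⟩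
  obtain ⟨l, hl, hnu, hprod⟩ := Nat.sSup_mem hT hTbdd
  refine ⟨l.length, mem_mLengths_iff.mpr ⟨l, rfl, fun x hx => ?_, hprod ▸ Associated.refl _⟩⟩
  by_contra hx_irr
  obtain ⟨y, z, hy, hz, rfl⟩ := (irreducible_or_factor (hnu x hx)).resolve_left hx_irr
  obtain ⟨s, t, rfl⟩ := List.append_of_mem hx
  have hlonger : sSup T + 1 ∈ T := by
    refine ⟨s ++ y :: z :: t, by simp [← hl]; omega, ?_, ?_⟩
    · simp only [List.mem_append, List.mem_cons] at hnu ⊢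
      rintro w (hw | rfl | rfl | hw)
      exacts [hnu w (.inl hw), hy, hz, hnu w (.inr (.inr hw))]
    · simpa [mul_assoc] using hprod
  have := le_csSup hTbdd hlonger
  omega

lemma exists_add_div_le_of_mem_mLengths (hsp : StronglyPrimary H) {b : H} {k l N : ℕ}
    (hk : k ∈ mLengths b) (hl : l ∈ mLengths b) (hkl : k < l) (hN : DvdProdOfLength b N)
    {a : H} {m : ℕ} (hm : m ∈ mLengths a) :
    ∃ i ∈ mLengths a, ∃ j ∈ mLengths a, i + m / N ≤ j := by
  obtain ⟨v, rfl, hirr, hassoc⟩ := mem_mLengths_iff.mp hm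
  obtain ⟨d, rfl⟩ := (hN.pow_dvd_prod (v.length / N) (fun x hx => (hirr x hx).not_isUnit)
    (Nat.div_mul_le_self _ _)).trans hassoc.dvd
  obtain ⟨e, he⟩ := hsp.mLengths_nonempty d
  refine ⟨_, add_mem_mLengths_mul (mul_mem_mLengths_pow hk _) he,
    _, add_mem_mLengths_mul (mul_mem_mLengths_pow hl _) he, ?_⟩
  have := Nat.mul_le_mul_left (v.length / N) (Nat.succ_le_of_lt hkl)
  rw [Nat.mul_succ] at this
  omega

end StronglyPrimary

end CancelCommMonoid

lemma one_add_one_div_two_mul_le_div {N m M : ℕ} (hN : 0 < N) (hm : 0 < m) (hlt : m < M)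
    (hdiv : m + m / N ≤ M) : 1 + 1 / (2 * N : ℚ) ≤ M / m := by
  have hlt_mul := Nat.lt_mul_div_succ m hN
  have key : (2 * N + 1) * m ≤ 2 * N * M := by
    rcases Nat.eq_zero_or_pos (m / N) with hq | hq
    · rw [hq] at hlt_mul; nlinarith
    · nlinarith
  rw [one_add_div (by positivity), div_le_div_iff₀ (by positivity) (by positivity)]
  exact_mod_cast (mul_comm M (2 * N)) ▸ key

lemma Nat.sInf_lt_sSup_of_ne {S : Set ℕ} (hS : BddAbove S) {m n : ℕ} (hm : m ∈ S) (hn : n ∈ S)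
    (hmn : m ≠ n) : sInf S < sSup S := by
  have := Nat.sInf_le hm
  have := Nat.sInf_le hn
  have := le_csSup hS hm
  have := le_csSup hS hn
  omega

/-- If `H` is a strongly primary monoid that is not half-factorial, then there is a rational
`β > 1` such that every set of lengths of `H` with at least two elements has elasticity
`max L(a) / min L(a) ≥ β`. -/
theorem stmt7 {H : Type*} [CancelCommMonoid H] (hsp : StronglyPrimary H)
    (hnhf : ∃ a : H, ∃ m ∈ mLengths a, ∃ n ∈ mLengths a, m ≠ n) :
    ∃ β : ℚ, 1 < β ∧ ∀ a : H, (∃ m ∈ mLengths a, ∃ n ∈ mLengths a, m ≠ n) →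
      β ≤ ((sSup (mLengths a) : ℕ) : ℚ) / ((sInf (mLengths a) : ℕ) : ℚ) := by
  obtain ⟨b, k₀, hk₀, l₀, hl₀, hne⟩ := hnhf
  obtain ⟨k, hk, l, hl, hkl⟩ : ∃ k ∈ mLengths b, ∃ l ∈ mLengths b, k < l := by
    rcases hne.lt_or_gt with h | h
    exacts [⟨k₀, hk₀, l₀, hl₀, h⟩, ⟨l₀, hl₀, k₀, hk₀, h⟩]
  obtain ⟨N, hN0, hN⟩ : ∃ N, 0 < N ∧ DvdProdOfLength b N :=
    hsp.2 b (not_isUnit_of_mem_mLengths_of_ne hk hl hkl.ne)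
  have hNpos : (0 : ℚ) < N := by exact_mod_cast hN0
  refine ⟨1 + 1 / (2 * N), lt_add_of_pos_right 1 (by positivity), ?_⟩
  rintro a ⟨m, hm, n, hn, hmn⟩
  have hbdd := hsp.bddAbove_mLengths a
  have hInf : sInf (mLengths a) ∈ mLengths a := Nat.sInf_mem ⟨m, hm⟩
  obtain ⟨i, hi, j, hj, hij⟩ := hsp.exists_add_div_le_of_mem_mLengths hk hl hkl hN hInf
  refine one_add_one_div_two_mul_le_div hN0
    (pos_of_mem_mLengths (not_isUnit_of_mem_mLengths_of_ne hm hn hmn) hInf)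
    (Nat.sInf_lt_sSup_of_ne hbdd hm hn hmn) ?_
  have := Nat.sInf_le hi
  have := le_csSup hbdd hj
  omega
end

section
/- Let G be a finite abelian group, A ∈ B(G), and let A₁ be an atom of B(G) of length |A₁| = 2 dividing A. Then max L(A) = 1 + max L(A·A₁^{-1}). -/
set_option linter.unusedSectionVars false


variable {G : Type*} [AddCommGroup G]

lemma mem_of_mem_sum {l : Multiset (Multiset G)} {a : G} (h : a ∈ l.sum) :
    ∃ T ∈ l, a ∈ T := by
  induction l using Multiset.induction with
  | empty => simp at h
  | cons T l ih =>
    simp only [Multiset.sum_cons, Multiset.mem_add] at h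
    rcases h with h | h
    · exact ⟨T, Multiset.mem_cons_self _ _, h⟩
    · obtain ⟨T', hT', ha⟩ := ih h
      exact ⟨T', Multiset.mem_cons_of_mem hT', ha⟩

lemma card_sum' (l : Multiset (Multiset G)) :
    Multiset.card l.sum = (l.map Multiset.card).sum := by
  induction l using Multiset.induction with
  | empty => simp
  | cons T l ih => simp [ih]

/-- Factorizations have at most `card S` factors. -/
lemma fac_card_le {S : Multiset G} {l : Multiset (Multiset G)}
    (hT : ∀ T ∈ l, IsMinZS T) (hsum : l.sum = S) :
    Multiset.card l ≤ Multiset.card S := by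
  subst hsum
  rw [card_sum']
  calc Multiset.card l = (l.map (fun _ => 1)).sum := by simp
    _ ≤ (l.map Multiset.card).sum := by
        apply Multiset.sum_map_le_sum_map
        intro T hTl
        have := (hT T hTl).1
        have : Multiset.card T ≠ 0 := by
          simpa [Multiset.card_eq_zero] using this
        omega

lemma bddAbove_ZSLengths (S : Multiset G) : BddAbove (ZSLengths S) := by
  refine ⟨Multiset.card S, ?_⟩
  rintro n ⟨l, rfl, hT, hsum⟩
  exact fac_card_le hT hsum

/-- Every nonzero zero-sum sequence contains a minimal zero-sum subsequence. -/
lemma exists_minZS_le (S : Multiset G) (h0 : S ≠ 0) (hs : S.sum = 0) :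
    ∃ T ≤ S, IsMinZS T := by
  induction S using Multiset.strongInductionOn with
  | ih S ih =>
    by_cases hmin : ∀ T : Multiset G, T ≤ S → T ≠ 0 → T ≠ S → T.sum ≠ 0
    · exact ⟨S, le_refl S, h0, hs, hmin⟩
    · push_neg at hmin
      obtain ⟨T, hTS, hT0, hTne, hTsum⟩ := hmin
      have hlt : T < S := lt_of_le_of_ne hTS hTne
      obtain ⟨T', hT'le, hT'⟩ := ih T hlt hT0 hTsum
      exact ⟨T', le_trans hT'le hTS, hT'⟩

/-- Every nonzero zero-sum sequence has a factorization into atoms. -/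
lemma exists_fac [DecidableEq G] (S : Multiset G) (h0 : S ≠ 0) (hs : S.sum = 0) :
    ∃ l : Multiset (Multiset G), 1 ≤ Multiset.card l ∧ (∀ T ∈ l, IsMinZS T) ∧ l.sum = S := by
  induction S using Multiset.strongInductionOn with
  | ih S ih =>
    obtain ⟨T, hTS, hT⟩ := exists_minZS_le S h0 hs
    by_cases hrest : S - T = 0
    · have hST : S = T := le_antisymm (tsub_eq_zero_iff_le.mp hrest) hTS
      exact ⟨{T}, by simp, by simpa using hT, by simp [hST]⟩
    · have hadd : S - T + T = S := tsub_add_cancel_of_le hTS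
      have hlt : S - T < S := by
        refine lt_of_le_of_ne (tsub_le_self) (fun h => ?_)
        have hc := congrArg Multiset.card hadd
        rw [h, Multiset.card_add] at hc
        exact hT.1 (Multiset.card_eq_zero.mp (by omega))
      have hsum' : (S - T).sum = 0 := by
        have := congrArg Multiset.sum hadd
        rw [Multiset.sum_add] at this
        rw [hT.2.1] at this
        simpa [hs] using this
      obtain ⟨l, hl1, hlT, hlsum⟩ := ih (S - T) hlt hrest hsum'
      refine ⟨T ::ₘ l, by rw [Multiset.card_cons]; omega, ?_, ?_⟩
      · intro U hU
        rcases Multiset.mem_cons.mp hU with h | h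
        · exact h ▸ hT
        · exact hlT U h
      · rw [Multiset.sum_cons, hlsum]
        rw [add_comm]
        exact hadd

lemma ZSLengths_nonempty [DecidableEq G] (S : Multiset G) (hs : S.sum = 0) : (ZSLengths S).Nonempty := by
  by_cases h0 : S = 0
  · exact ⟨0, 0, by simp, by simp, by simp [h0]⟩
  · obtain ⟨l, _, hlT, hlsum⟩ := exists_fac S h0 hs
    exact ⟨Multiset.card l, l, rfl, hlT, hlsum⟩

/-- Splitting lemma: a pair inside a sum of a family lies in one member or across two. -/
lemma split_pair [DecidableEq G] (l : Multiset (Multiset G)) (a b : G) (hle : (a ::ₘ {b}) ≤ l.sum) :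
    (∃ T ∈ l, (a ::ₘ {b}) ≤ T) ∨
    ∃ T₁ T₂ l', l = T₁ ::ₘ T₂ ::ₘ l' ∧ a ∈ T₁ ∧ b ∈ T₂ := by
  classical
  have ha : a ∈ l.sum := Multiset.mem_of_le hle (Multiset.mem_cons_self _ _)
  obtain ⟨T₁, hT₁l, haT₁⟩ := mem_of_mem_sum ha
  set l₀ := l.erase T₁ with hl₀
  have hcons : l = T₁ ::ₘ l₀ := (Multiset.cons_erase hT₁l).symm
  by_cases hb0 : b ∈ l₀.sum
  · obtain ⟨T₂, hT₂l, hbT₂⟩ := mem_of_mem_sum hb0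
    exact Or.inr ⟨T₁, T₂, l₀.erase T₂, by rw [hcons, Multiset.cons_erase hT₂l], haT₁, hbT₂⟩
  · left
    refine ⟨T₁, hT₁l, ?_⟩
    rw [Multiset.le_iff_count]
    intro x
    have hcount : Multiset.count x (a ::ₘ {b}) ≤ Multiset.count x T₁ + Multiset.count x l₀.sum := by
      have := Multiset.count_le_of_le x hle
      rw [hcons, Multiset.sum_cons, Multiset.count_add] at this
      exact this
    by_cases hx : Multiset.count x l₀.sum = 0
    · omega
    · have hxb : x ≠ b := fun h => hb0 (h ▸ Multiset.count_pos.mp (by omega))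
      by_cases hxa : x = a
      · subst hxa
        have h1 : Multiset.count x (x ::ₘ {b}) = 1 := by
          simp [Multiset.count_cons, Multiset.count_singleton, hxb]
        rw [h1]
        exact Multiset.count_pos.mpr haT₁
      · have : Multiset.count x (a ::ₘ {b}) = 0 := by
          simp [Multiset.count_cons, Multiset.count_singleton, hxa, hxb]
        omega

/-- If `A` is a zero-sum sequence over a finite abelian group `G` and `A₁` is an atom of
length 2 dividing `A`, then `max L(A) = 1 + max L(A · A₁⁻¹)`. -/
theorem stmt12 [Fintype G] [DecidableEq G] (A A₁ : Multiset G) (hA : A.sum = 0)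
    (h1 : IsMinZS A₁) (hcard : Multiset.card A₁ = 2) (hdvd : A₁ ≤ A) :
    sSup (ZSLengths A) = 1 + sSup (ZSLengths (A - A₁)) := by
  classical
  -- basic structure of A₁
  obtain ⟨a, b, hab⟩ := Multiset.card_eq_two.mp hcard
  have hA₁sum : a + b = 0 := by simpa [hab] using h1.2.1
  have ha0 : a ≠ 0 := by
    have hle : ({a} : Multiset G) ≤ A₁ := by
      rw [hab, Multiset.insert_eq_cons]
      exact Multiset.cons_le_cons a (Multiset.zero_le _)
    have := h1.2.2 {a} hle (by simp)
      (by intro h; rw [← h] at hcard; simp at hcard)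
    simpa using this
  have hb0 : b ≠ 0 := by
    intro h
    exact ha0 (by simpa [h] using hA₁sum)
  -- sum of A - A₁
  have hsub_add : A - A₁ + A₁ = A := tsub_add_cancel_of_le hdvd
  have hsub_sum : (A - A₁).sum = 0 := by
    have := congrArg Multiset.sum hsub_add
    rw [Multiset.sum_add, h1.2.1] at this
    simpa [hA] using this
  have hA0 : A ≠ 0 := fun h => h1.1 (le_antisymm (h ▸ hdvd) (Multiset.zero_le _))
  have hne1 : (ZSLengths A).Nonempty := ZSLengths_nonempty A hA
  have hne2 : (ZSLengths (A - A₁)).Nonempty := ZSLengths_nonempty _ hsub_sum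
  have hbdd1 := bddAbove_ZSLengths A
  have hbdd2 := bddAbove_ZSLengths (A - A₁)
  -- key upper bound: every length of A is ≤ 1 + some length of A - A₁
  have key : ∀ n ∈ ZSLengths A, ∃ m ∈ ZSLengths (A - A₁), n ≤ 1 + m := by
    rintro n ⟨l, rfl, hlT, hlsum⟩
    have habc : A₁ = a ::ₘ {b} := by rw [hab, Multiset.insert_eq_cons]
    have hpair : (a ::ₘ {b}) ≤ l.sum := by rw [hlsum, ← habc]; exact hdvd
    rcases split_pair l a b hpair with ⟨T, hTl, hT⟩ | ⟨T₁, T₂, l', hl, haT₁, hbT₂⟩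
    · -- A₁ is (contained in, hence equal to) one of the atoms
      have hTeq : A₁ = T := by
        by_contra hne
        exact (hlT T hTl).2.2 A₁ (habc ▸ hT) h1.1 hne h1.2.1
      -- remove it
      have hcons : l = A₁ ::ₘ l.erase T := by
        rw [hTeq]; exact (Multiset.cons_erase hTl).symm
      refine ⟨Multiset.card (l.erase T), ⟨l.erase T, rfl, ?_, ?_⟩, ?_⟩
      · intro U hU
        exact hlT U (Multiset.mem_of_le (Multiset.erase_le _ _) hU)
      · have := congrArg Multiset.sum hcons
        rw [Multiset.sum_cons, hlsum] at this
        have : A - A₁ = (l.erase T).sum := by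
          rw [this, add_tsub_cancel_left]
        exact this.symm
      · have : Multiset.card l = 1 + Multiset.card (l.erase T) := by
          conv_lhs => rw [hcons]
          simp [add_comm]
        omega
    · -- a and b are in two distinct atoms; recombine
      have hT₁ : IsMinZS T₁ := hlT T₁ (by rw [hl]; exact Multiset.mem_cons_self _ _)
      have hT₂ : IsMinZS T₂ := hlT T₂ (by
        rw [hl]
        exact Multiset.mem_cons_of_mem (Multiset.mem_cons_self _ _))
      set E₁ := T₁.erase a with hE₁
      set E₂ := T₂.erase b with hE₂
      have hT₁c : T₁ = a ::ₘ E₁ := (Multiset.cons_erase haT₁).symm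
      have hT₂c : T₂ = b ::ₘ E₂ := (Multiset.cons_erase hbT₂).symm
      have hE₁sum : E₁.sum = -a := by
        have := hT₁.2.1
        rw [hT₁c, Multiset.sum_cons] at this
        exact (neg_eq_of_add_eq_zero_right this).symm
      have hE₂sum : E₂.sum = -b := by
        have := hT₂.2.1
        rw [hT₂c, Multiset.sum_cons] at this
        exact (neg_eq_of_add_eq_zero_right this).symm
      have hE₁0 : E₁ ≠ 0 := by
        intro h
        rw [h] at hE₁sum
        simp at hE₁sum
        exact ha0 hE₁sum
      set U : Multiset G := E₁ + E₂ with hU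
      have hU0 : U ≠ 0 := by
        intro h
        apply hE₁0
        have hc := congrArg Multiset.card h
        rw [hU, Multiset.card_add, Multiset.card_zero] at hc
        exact Multiset.card_eq_zero.mp (by omega)
      have hUsum : U.sum = 0 := by
        rw [hU, Multiset.sum_add, hE₁sum, hE₂sum, ← neg_add, hA₁sum, neg_zero]
      obtain ⟨lU, hlU1, hlUT, hlUsum⟩ := exists_fac U hU0 hUsum
      refine ⟨Multiset.card (lU + l'), ⟨lU + l', rfl, ?_, ?_⟩, ?_⟩
      · intro T hT
        rcases Multiset.mem_add.mp hT with h | h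
        · exact hlUT T h
        · refine hlT T ?_
          rw [hl]
          exact Multiset.mem_cons_of_mem (Multiset.mem_cons_of_mem h)
      · -- sum of new factorization is A - A₁
        have hAeq : A = A₁ + (U + l'.sum) := by
          rw [← hlsum, hl, Multiset.sum_cons, Multiset.sum_cons, hT₁c, hT₂c, habc, hU]
          ext x
          simp only [Multiset.count_add, Multiset.count_cons, Multiset.count_singleton]
          split <;> split <;> omega
        rw [Multiset.sum_add, hlUsum, hAeq, add_tsub_cancel_left]
      · have hcl : Multiset.card l = 2 + Multiset.card l' := by
          rw [hl]; simp; omega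
        simp only [Multiset.card_add]
        omega
  -- conclude by antisymmetry
  have h1le : sSup (ZSLengths A) ≤ 1 + sSup (ZSLengths (A - A₁)) := by
    have hmem := Nat.sSup_mem hne1 hbdd1
    obtain ⟨m, hm, hle⟩ := key _ hmem
    have := le_csSup hbdd2 hm
    omega
  have h2le : 1 + sSup (ZSLengths (A - A₁)) ≤ sSup (ZSLengths A) := by
    have hmem := Nat.sSup_mem hne2 hbdd2
    obtain ⟨l, hlc, hlT, hlsum⟩ := hmem
    have : 1 + sSup (ZSLengths (A - A₁)) ∈ ZSLengths A := by
      refine ⟨A₁ ::ₘ l, by simp [hlc, add_comm], ?_, ?_⟩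
      · intro T hT
        rcases Multiset.mem_cons.mp hT with h | h
        · exact h ▸ h1
        · exact hlT T h
      · rw [Multiset.sum_cons, hlsum]
        rw [add_comm]
        exact hsub_add
    exact le_csSup hbdd1 this
  omega
end

section
/- Let G be a finite abelian group and A ∈ B(G) a zero-sum sequence that is a product of atoms of length 2, and suppose that every atom A₁ of B(G) dividing A has length |A₁| = 2 or |A₁| = 4. Then max L(A) − 1 ∉ L(A). -/
variable {G : Type*} [AddCommGroup G]

/-- The pairing invariant: no zero term, counts symmetric under negation,
and counts of 2-torsion elements even. -/
def PairInv [DecidableEq G] (S : Multiset G) : Prop :=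
  S.count 0 = 0 ∧ (∀ g : G, S.count g = S.count (-g)) ∧
    ∀ g : G, g = -g → Even (S.count g)

lemma atom2 (T : Multiset G) (hT : IsMinZS T) (hc : Multiset.card T = 2) :
    ∃ g : G, g ≠ 0 ∧ T = {g, -g} := by
  obtain ⟨a, b, rfl⟩ := Multiset.card_eq_two.mp hc
  have hsum : a + b = 0 := by simpa using hT.2.1
  have ha : a ≠ 0 := by
    rintro rfl
    exact hT.2.2 {0} (by simp [Multiset.le_iff_count, Multiset.count_singleton,
      Multiset.count_cons]) (by simp) (by
        intro h
        have := congrArg Multiset.card h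
        simp at this) (by simp)
  refine ⟨a, ha, ?_⟩
  have hb : b = -a := eq_neg_of_add_eq_zero_right hsum
  rw [hb]

lemma neg_map_pair [DecidableEq G] (g : G) :
    ({g, -g} : Multiset G).map (fun x => -x) = {g, -g} := by
  simp only [Multiset.insert_eq_cons, Multiset.map_cons, Multiset.map_singleton, neg_neg]
  exact Multiset.cons_swap _ _ _

lemma pairInv_pair [DecidableEq G] (g : G) (hg : g ≠ 0) :
    PairInv ({g, -g} : Multiset G) := by
  have hcnt : ∀ h : G, ({g, -g} : Multiset G).count (-h) = ({g, -g} : Multiset G).count h := by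
    intro h
    conv_lhs => rw [← neg_map_pair g]
    exact Multiset.count_map_eq_count' _ _ neg_injective h
  refine ⟨?_, fun h => (hcnt h).symm, ?_⟩
  · have h0 : (0 : G) ≠ g := fun h => hg h.symm
    have h0' : (0 : G) ≠ -g := fun h => hg (neg_eq_zero.mp h.symm)
    simp [Multiset.insert_eq_cons, Multiset.count_cons, Multiset.count_singleton, h0, h0']
  · intro h hh
    by_cases h1 : h = g
    · rw [h1] at hh ⊢
      have : ({g, -g} : Multiset G).count g = ({-g} : Multiset G).count g + 1 := by
        rw [Multiset.insert_eq_cons, Multiset.count_cons_self]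
      rw [this, Multiset.count_singleton, if_pos hh]
      exact ⟨1, rfl⟩
    · have h2 : h ≠ -g := by
        intro h2
        exact h1 (by rw [hh, h2, neg_neg])
      simp [Multiset.insert_eq_cons, Multiset.count_cons, Multiset.count_singleton, h1, h2]

lemma pairInv_sum2 [DecidableEq G] (l : Multiset (Multiset G))
    (h : ∀ T ∈ l, IsMinZS T ∧ Multiset.card T = 2) : PairInv l.sum := by
  induction l using Multiset.induction with
  | empty => exact ⟨by simp, fun g => by simp, fun g _ => by simp⟩
  | cons T s ih =>
    have hT := h T (by simp)
    obtain ⟨g, hg, rfl⟩ := atom2 T hT.1 hT.2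
    have hs := ih (fun U hU => h U (by simp [hU]))
    have hp := pairInv_pair g hg
    rw [Multiset.sum_cons]
    refine ⟨?_, ?_, ?_⟩
    · rw [Multiset.count_add, hp.1, hs.1]
    · intro a
      rw [Multiset.count_add, Multiset.count_add, hp.2.1 a, hs.2.1 a]
    · intro a ha
      rw [Multiset.count_add]
      exact (hp.2.2 a ha).add (hs.2.2 a ha)

lemma pairInv_sub [DecidableEq G] (S T : Multiset G)
    (hST : PairInv (S + T)) (hT : PairInv T) : PairInv S := by
  have key : ∀ g : G, (S + T).count g = S.count g + T.count g := fun g => Multiset.count_add ..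
  refine ⟨?_, ?_, ?_⟩
  · have h1 := hST.1; rw [key] at h1
    have h2 := hT.1
    omega
  · intro g
    have h1 := hST.2.1 g
    have h2 := hT.2.1 g
    rw [key, key] at h1
    omega
  · intro g hg
    obtain ⟨a, ha⟩ := hST.2.2 g hg
    obtain ⟨b, hb⟩ := hT.2.2 g hg
    rw [key] at ha
    exact ⟨S.count g / 2, by omega⟩

lemma no_pairInv_atom4 [DecidableEq G] (B : Multiset G) (hB : IsMinZS B)
    (hc : Multiset.card B = 4) (hp : PairInv B) : False := by
  obtain ⟨g, hg⟩ : ∃ g, g ∈ B := Multiset.exists_mem_of_ne_zero hB.1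
  have hgc : 1 ≤ B.count g := Multiset.one_le_count_iff_mem.mpr hg
  have hg0 : g ≠ 0 := by
    have h0 := hp.1
    rintro rfl
    omega
  by_cases h2 : g = -g
  · obtain ⟨m, hm⟩ := hp.2.2 g h2
    have hle : ({g, g} : Multiset G) ≤ B := by
      rw [Multiset.le_iff_count]
      intro a
      by_cases ha : a = g
      · subst ha
        have : ({a, a} : Multiset G).count a = ({a} : Multiset G).count a + 1 := by
          rw [Multiset.insert_eq_cons, Multiset.count_cons_self]
        rw [this, Multiset.count_singleton_self]
        omega
      · simp [Multiset.insert_eq_cons, Multiset.count_cons, Multiset.count_singleton, ha]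
    refine hB.2.2 {g, g} hle (by simp) ?_ ?_
    · intro h
      have := congrArg Multiset.card h
      simp [hc] at this
    · have hgg : g + g = 0 := add_eq_zero_iff_eq_neg.mpr h2
      simpa using hgg
  · have hgn : -g ∈ B := by
      have := hp.2.1 g
      exact Multiset.one_le_count_iff_mem.mp (by omega)
    have hgnc : 1 ≤ B.count (-g) := Multiset.one_le_count_iff_mem.mpr hgn
    have hle : ({g, -g} : Multiset G) ≤ B := by
      rw [Multiset.le_iff_count]
      intro a
      by_cases ha : a = g
      · rw [ha]
        have hcc : ({g, -g} : Multiset G).count g = ({-g} : Multiset G).count g + 1 := by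
          rw [Multiset.insert_eq_cons, Multiset.count_cons_self]
        rw [hcc, Multiset.count_singleton, if_neg h2]
        omega
      · by_cases hb : a = -g
        · rw [hb]
          have hne : (-g : G) ≠ g := fun h => h2 h.symm
          have hcc : ({g, -g} : Multiset G).count (-g) = 1 := by
            rw [Multiset.insert_eq_cons, Multiset.count_cons, Multiset.count_singleton_self,
              if_neg hne]
          rw [hcc]
          omega
        · rw [Multiset.insert_eq_cons, Multiset.count_cons, Multiset.count_singleton,
            if_neg hb, if_neg ha]
          simp
    refine hB.2.2 {g, -g} hle (by simp) ?_ (by simp)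
    intro h
    have := congrArg Multiset.card h
    simp [hc] at this

lemma sum_card_const (l : Multiset (Multiset G)) (k : ℕ)
    (h : ∀ T ∈ l, Multiset.card T = k) :
    Multiset.card l.sum = k * Multiset.card l := by
  rw [show Multiset.card l.sum = (l.map Multiset.card).sum from Multiset.card_join l]
  have hrep : l.map Multiset.card = Multiset.replicate (Multiset.card l) k := by
    rw [Multiset.eq_replicate]
    refine ⟨by simp, ?_⟩
    intro b hb
    obtain ⟨T, hT, rfl⟩ := Multiset.mem_map.mp hb
    exact h T hT
  rw [hrep, Multiset.sum_replicate, smul_eq_mul, Nat.mul_comm]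

lemma two_mul_card_le (s : Multiset ℕ) (h : ∀ x ∈ s, 2 ≤ x) :
    2 * Multiset.card s ≤ s.sum := by
  induction s using Multiset.induction with
  | empty => simp
  | cons a t ih =>
    have ha := h a (by simp)
    have ht := ih (fun x hx => h x (by simp [hx]))
    simp only [Multiset.card_cons, Multiset.sum_cons]
    omega

/-- Let `A` be a zero-sum sequence over a finite abelian group `G` that is a product of atoms
of length 2, such that every atom dividing `A` has length 2 or 4. Then
`max L(A) − 1 ∉ L(A)`. -/
theorem stmt13 [Fintype G] (A : Multiset G)
    (h2 : ∃ l : Multiset (Multiset G),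
      (∀ T ∈ l, IsMinZS T ∧ Multiset.card T = 2) ∧ l.sum = A)
    (hall : ∀ A₁ : Multiset G, IsMinZS A₁ → A₁ ≤ A →
      Multiset.card A₁ = 2 ∨ Multiset.card A₁ = 4) :
    ∀ n ∈ ZSLengths A, (n : ℤ) ≠ ((sSup (ZSLengths A) : ℕ) : ℤ) - 1 := by
  classical
  obtain ⟨l₀, hl₀, hl₀sum⟩ := h2
  set N := Multiset.card l₀ with hN
  have hcardA : Multiset.card A = 2 * N := by
    rw [← hl₀sum]
    exact sum_card_const l₀ 2 (fun T hT => (hl₀ T hT).2)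
  have hmemN : N ∈ ZSLengths A := ⟨l₀, rfl, fun T hT => (hl₀ T hT).1, hl₀sum⟩
  have hub : ∀ k ∈ ZSLengths A, k ≤ N := by
    rintro k ⟨l, rfl, hl, hlsum⟩
    have hTle : ∀ T ∈ l, T ≤ A := by
      intro T hT
      rw [← hlsum, ← Multiset.cons_erase hT, Multiset.sum_cons]
      exact Multiset.le_add_right _ _
    have h2le : ∀ x ∈ l.map Multiset.card, 2 ≤ x := by
      intro x hx
      obtain ⟨T, hT, rfl⟩ := Multiset.mem_map.mp hx
      rcases hall T (hl T hT) (hTle T hT) with h | h <;> omega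
    have hsum : 2 * Multiset.card l ≤ (l.map Multiset.card).sum := by
      have := two_mul_card_le (l.map Multiset.card) h2le
      simpa using this
    have hA : Multiset.card A = (l.map Multiset.card).sum := by
      rw [← hlsum]; exact Multiset.card_join l
    omega
  have hsup : sSup (ZSLengths A) = N :=
    le_antisymm (csSup_le ⟨N, hmemN⟩ hub) (le_csSup ⟨N, hub⟩ hmemN)
  rintro n ⟨l, rfl, hl, hlsum⟩ heq
  rw [hsup] at heq
  have hNn : N = Multiset.card l + 1 := by omega
  have hTle : ∀ T ∈ l, T ≤ A := by
    intro T hT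
    rw [← hlsum, ← Multiset.cons_erase hT, Multiset.sum_cons]
    exact Multiset.le_add_right _ _
  have hcards : ∀ T ∈ l, Multiset.card T = 2 ∨ Multiset.card T = 4 :=
    fun T hT => hall T (hl T hT) (hTle T hT)
  set l₄ := l.filter (fun T => Multiset.card T = 4) with hl₄def
  set l₂ := l.filter (fun T => ¬ Multiset.card T = 4) with hl₂def
  have hsplit : l₄ + l₂ = l := Multiset.filter_add_not _ l
  have hc4sum : Multiset.card l₄.sum = 4 * Multiset.card l₄ :=
    sum_card_const l₄ 4 (fun T hT => (Multiset.mem_filter.mp hT).2)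
  have hc2sum : Multiset.card l₂.sum = 2 * Multiset.card l₂ := by
    refine sum_card_const l₂ 2 (fun T hT => ?_)
    have h1 := (Multiset.mem_filter.mp hT).1
    have h2 := (Multiset.mem_filter.mp hT).2
    rcases hcards T h1 with h | h
    · exact h
    · exact absurd h h2
  have hcardl : Multiset.card l₄ + Multiset.card l₂ = Multiset.card l := by
    rw [← hsplit, Multiset.card_add]
  have hAsum : Multiset.card A = Multiset.card l₄.sum + Multiset.card l₂.sum := by
    rw [← hlsum, ← hsplit, Multiset.sum_add, Multiset.card_add]
  have hc4 : Multiset.card l₄ = 1 := by omega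
  obtain ⟨T₄, hT4⟩ := Multiset.card_eq_one.mp hc4
  have hT4mem4 : T₄ ∈ l₄ := by rw [hT4]; exact Multiset.mem_singleton_self _
  have hT4mem : T₄ ∈ l := Multiset.mem_of_mem_filter hT4mem4
  have h4card : Multiset.card T₄ = 4 := (Multiset.mem_filter.mp hT4mem4).2
  have hrest : ∀ T ∈ l.erase T₄, IsMinZS T ∧ Multiset.card T = 2 := by
    intro T hT
    have hTl := Multiset.mem_of_mem_erase hT
    refine ⟨hl T hTl, ?_⟩
    rcases hcards T hTl with h | h
    · exact h
    · exfalso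
      have hTin : T ∈ l₄ := Multiset.mem_filter.mpr ⟨hTl, h⟩
      rw [hT4, Multiset.mem_singleton] at hTin
      subst hTin
      have hcnt : Multiset.count T l = 1 := by
        have := Multiset.count_filter (p := fun T' => Multiset.card T' = 4)
          (a := T) (s := l)
        rw [← hl₄def, hT4] at this
        simp [h] at this
        omega
      have : Multiset.count T (l.erase T) = 0 := by
        rw [Multiset.count_erase_self, hcnt]
      exact absurd (Multiset.count_pos.mpr hT) (by omega)
  have hPA : PairInv A := by
    rw [← hl₀sum]; exact pairInv_sum2 l₀ hl₀
  have hPrest : PairInv (l.erase T₄).sum := pairInv_sum2 _ hrest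
  have hAeq : A = T₄ + (l.erase T₄).sum := by
    rw [← hlsum, ← Multiset.sum_cons, Multiset.cons_erase hT4mem]
  have hPT4 : PairInv T₄ := pairInv_sub T₄ _ (by rw [← hAeq]; exact hPA) hPrest
  exact no_pairInv_atom4 T₄ (hl T₄ hT4mem) h4card hPT4
end
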